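/- Let Γ be a countable discrete group, X a compact Hausdorff space with a Γ-action by homeomorphisms and base point x₀ ∈ X. Let (Mₙ) and M be amenable von Neumann subalgebras of L(Γ), and suppose every x ∈ M is the ‖·‖_{τ₀}-limit of a sequence (xₙ) with xₙ ∈ Mₙ for all n. For an amenable von Neumann subalgebra N ⊆ L(Γ) and f ∈ C(X), set f⁺(N) = sup{ Re φ(M_f) : φ an (N, τ₀)-hypertrace }. Then for every f ∈ C(X): f⁺(M) ≥ limsupₙ f⁺(Mₙ). -/

import Mathlib

/-!
For each `n` pick an `(Mₙ, τ₀)`-hypertrace `φₙ` that nearly attains `f⁺(Mₙ)`, and an ultrafilter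
`U` along which `f⁺(Mₙ)` tends to the limsup. States are contractive, so by Tychonoff the `φₙ`
converge pointwise along `U` to a state `Φ`, which still extends `τ₀`. It is `M`-central: for
`m ∈ M` with approximants `xₙ ∈ Mₙ`, Cauchy–Schwarz and the traciality of `τ₀` on `L(Γ)` give
`|φₙ(mT) - φₙ(Tm)| ≤ 2 ‖T‖ ‖m - xₙ‖_{τ₀} → 0`. So `Φ` is an `(M, τ₀)`-hypertrace with
`Re Φ(M_f) ≥ limsup f⁺(Mₙ)`.
-/

open scoped InnerProductSpace ComplexOrder ENNReal
open ContinuousLinearMap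

noncomputable section

/-- A group `G` is amenable if there is a left-translation-invariant state (invariant mean)
on the algebra `ℓ^∞(G)` of bounded complex functions on `G`. -/
def HasInvariantMean (G : Type*) [Group G] : Prop :=
  ∃ m : lp (fun _ : G => ℂ) ∞ →ₗ[ℂ] ℂ,
    m 1 = 1 ∧
    (∀ f : lp (fun _ : G => ℂ) ∞, 0 ≤ m (star f * f)) ∧
    ∀ (g : G) (f₁ f₂ : lp (fun _ : G => ℂ) ∞), (∀ x : G, f₂ x = f₁ (g * x)) → m f₂ = m f₁

variable {Γ : Type*} [Group Γ] [Countable Γ]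
variable {H : Type*} [NormedAddCommGroup H] [InnerProductSpace ℂ H] [CompleteSpace H]

/-- A state on `B(H)`: a positive linear functional taking the value `1` at the unit. -/
def IsStateB (φ : (H →L[ℂ] H) →ₗ[ℂ] ℂ) : Prop :=
  φ 1 = 1 ∧ ∀ T : H →L[ℂ] H, 0 ≤ φ (adjoint T * T)

/-- The group von Neumann algebra `L(Γ)`: the double commutant of the range of the left
regular representation `lam`. -/
def groupVN (lam : Γ → H →L[ℂ] H) : Set (H →L[ℂ] H) :=
  Set.centralizer (Set.centralizer (Set.range lam))

/-- For a subgroup `K ≤ Γ`, the von Neumann subalgebra `L(K)` of `L(Γ)` generated by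
`{lam h : h ∈ K}`, realized as the double commutant. -/
def subgroupVN (lam : Γ → H →L[ℂ] H) (K : Subgroup Γ) : Set (H →L[ℂ] H) :=
  Set.centralizer (Set.centralizer (lam '' (K : Set Γ)))

/-- The canonical trace `τ₀(x) = ⟨x δ_e, δ_e⟩` on `L(Γ)`, where `δ_e = b 1`. -/
def tau0 (b : HilbertBasis Γ ℂ H) : (H →L[ℂ] H) → ℂ :=
  fun x => ⟪(b 1 : H), x (b 1)⟫_ℂ

/-- An `(M, τ₀)`-hypertrace: a state `φ` on `B(ℓ²(Γ))` with `φ|_{L(Γ)} = τ₀` and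
`φ(mT) = φ(Tm)` for all `m ∈ M`, `T ∈ B(ℓ²(Γ))`. -/
def IsHypertrace (b : HilbertBasis Γ ℂ H) (lam : Γ → H →L[ℂ] H)
    (M : Set (H →L[ℂ] H)) (φ : (H →L[ℂ] H) →ₗ[ℂ] ℂ) : Prop :=
  IsStateB φ ∧ (∀ x ∈ groupVN lam, φ x = tau0 b x) ∧
    ∀ m ∈ M, ∀ T : H →L[ℂ] H, φ (m * T) = φ (T * m)

/-- `f⁺(N) = sup { Re φ(M_f) : φ an (N, τ₀)-hypertrace }`. -/
def fplus {Γ : Type*} [Group Γ] [Countable Γ]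
    {H : Type*} [NormedAddCommGroup H] [InnerProductSpace ℂ H] [CompleteSpace H]
    {X : Type*} [TopologicalSpace X] [CompactSpace X]
    (b : HilbertBasis Γ ℂ H) (lam : Γ → H →L[ℂ] H)
    (Mop : C(X, ℂ) → (H →L[ℂ] H)) (N : Set (H →L[ℂ] H)) (f : C(X, ℂ)) : ℝ :=
  sSup ((fun φ : (H →L[ℂ] H) →ₗ[ℂ] ℂ => (φ (Mop f)).re) '' {φ | IsHypertrace b lam N φ})



open Filter Topology

namespace HilbertBasis

variable {ι 𝕜 E : Type*} [RCLike 𝕜] [NormedAddCommGroup E] [InnerProductSpace 𝕜 E]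

lemma ext_continuousLinearMap (b : HilbertBasis ι 𝕜 E) {A B : E →L[𝕜] E}
    (h : ∀ i, A (b i) = B (b i)) : A = B :=
  ContinuousLinearMap.ext_on (Submodule.dense_iff_topologicalClosure_eq_top.2 b.dense_span)
    (Set.forall_mem_range.2 h)

variable [CompleteSpace E]

def permute (b : HilbertBasis ι 𝕜 E) (e : Equiv.Perm ι) : E ≃ₗᵢ[𝕜] E :=
  b.repr.trans (HilbertBasis.mk (b.orthonormal.comp e e.injective)
    (by rw [Set.range_comp, e.range_eq_univ, Set.image_univ]; exact b.dense_span.ge)).repr.symm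

@[simp]
lemma permute_apply_self (b : HilbertBasis ι 𝕜 E) (e : Equiv.Perm ι) (i : ι) :
    b.permute e (b i) = b (e i) := by
  classical
  simp [permute, b.repr_self, HilbertBasis.repr_symm_single]

end HilbertBasis

namespace IsStateB

variable {H : Type*} [NormedAddCommGroup H] [InnerProductSpace ℂ H] [CompleteSpace H]
  {φ : (H →L[ℂ] H) →ₗ[ℂ] ℂ}

def toPositiveLinearMap (hφ : IsStateB φ) : (H →L[ℂ] H) →ₚ[ℂ] ℂ :=
  PositiveLinearMap.mk₀ φ fun x hx => by
    obtain ⟨s, rfl⟩ := CStarAlgebra.nonneg_iff_eq_star_mul_self.mp hx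
    simpa [ContinuousLinearMap.star_eq_adjoint] using hφ.2 s

@[simp]
lemma toPositiveLinearMap_apply (hφ : IsStateB φ) (T : H →L[ℂ] H) :
    hφ.toPositiveLinearMap T = φ T :=
  rfl

lemma norm_apply_star_mul_le (hφ : IsStateB φ) (a c : H →L[ℂ] H) :
    ‖φ (star a * c)‖ ≤ √(φ (star a * a)).re * √(φ (star c * c)).re :=
  let f := hφ.toPositiveLinearMap
  norm_inner_le_norm (𝕜 := ℂ) (f.toPreGNS a) (f.toPreGNS c)

lemma sqrt_re_apply_star_mul_self_le (hφ : IsStateB φ) (T : H →L[ℂ] H) :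
    √(φ (star T * T)).re ≤ ‖T‖ := by
  have h := hφ.toPositiveLinearMap.norm_apply_le_of_nonneg _ (star_mul_self_nonneg T)
  refine Real.sqrt_le_iff.2 ⟨norm_nonneg _, ?_⟩
  calc (φ (star T * T)).re ≤ ‖φ (star T * T)‖ := Complex.re_le_norm _
    _ ≤ ‖T‖ ^ 2 := by simpa [hφ.1, CStarRing.norm_star_mul_self, sq] using h

lemma norm_apply_le (hφ : IsStateB φ) (T : H →L[ℂ] H) : ‖φ T‖ ≤ ‖T‖ := by
  simpa [hφ.1] using (hφ.norm_apply_star_mul_le 1 T).trans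
    (mul_le_mul_of_nonneg_left (hφ.sqrt_re_apply_star_mul_self_le T) (by positivity))

lemma norm_apply_mul_sub_apply_mul_le (hφ : IsStateB φ) (y T : H →L[ℂ] H) :
    ‖φ (y * T) - φ (T * y)‖ ≤ ‖T‖ * (√(φ (y * star y)).re + √(φ (star y * y)).re) := by
  have hleft : ‖φ (y * T)‖ ≤ √(φ (y * star y)).re * ‖T‖ := by
    simpa using (hφ.norm_apply_star_mul_le (star y) T).trans
      (mul_le_mul_of_nonneg_left (hφ.sqrt_re_apply_star_mul_self_le T) (Real.sqrt_nonneg _))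
  have hright : ‖φ (T * y)‖ ≤ ‖T‖ * √(φ (star y * y)).re := by
    simpa using (hφ.norm_apply_star_mul_le (star T) y).trans
      (mul_le_mul_of_nonneg_right (by simpa using hφ.sqrt_re_apply_star_mul_self_le (star T))
        (Real.sqrt_nonneg _))
  calc ‖φ (y * T) - φ (T * y)‖ ≤ ‖φ (y * T)‖ + ‖φ (T * y)‖ := norm_sub_le _ _
    _ ≤ _ := by linarith [mul_add ‖T‖ √(φ (y * star y)).re √(φ (star y * y)).re]

lemma of_tendsto {ι : Type*} {l : Filter ι} [l.NeBot] {φ : ι → (H →L[ℂ] H) →ₗ[ℂ] ℂ}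
    {Φ : (H →L[ℂ] H) →ₗ[ℂ] ℂ} (hφ : ∀ i, IsStateB (φ i))
    (hlim : ∀ T, Tendsto (fun i => φ i T) l (𝓝 (Φ T))) : IsStateB Φ :=
  ⟨tendsto_nhds_unique (hlim 1) (by simp [fun i => (hφ i).1]),
    fun T => ge_of_tendsto (hlim _) (Eventually.of_forall fun i => (hφ i).2 T)⟩

end IsStateB

lemma LinearMap.exists_tendsto_ultrafilter_of_norm_le {ι 𝕜 E : Type*} [NormedField 𝕜]
    [ProperSpace 𝕜] [AddCommMonoid E] [Module 𝕜 E] (φ : ι → E →ₗ[𝕜] 𝕜) (C : E → ℝ)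
    (hC : ∀ i x, ‖φ i x‖ ≤ C x) (U : Ultrafilter ι) :
    ∃ Φ : E →ₗ[𝕜] 𝕜, ∀ x, Tendsto (fun i => φ i x) U (𝓝 (Φ x)) := by
  have hK : IsCompact (Set.univ.pi fun x => Metric.closedBall (0 : 𝕜) (C x)) :=
    isCompact_univ_pi fun x => isCompact_closedBall _ _
  obtain ⟨f, -, hf⟩ := hK.ultrafilter_le_nhds (U.map fun i => ⇑(φ i)) (by
    rw [Ultrafilter.coe_map, Filter.le_principal_iff, Filter.mem_map]
    exact univ_mem' fun i => Set.mem_univ_pi.2 fun x => mem_closedBall_zero_iff.2 (hC i x))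
  exact ⟨linearMapOfTendsto f φ hf, tendsto_pi_nhds.1 hf⟩

lemma exists_ultrafilter_tendsto_limsup {α β : Type*} [ConditionallyCompleteLinearOrder α]
    [TopologicalSpace α] [OrderTopology α] {u : β → α} {l : Filter β} [l.NeBot]
    (hc : IsCoboundedUnder (· ≤ ·) l u) (hb : IsBoundedUnder (· ≤ ·) l u) :
    ∃ U : Ultrafilter β, ↑U ≤ l ∧ Tendsto u U (𝓝 (limsup u l)) :=
  mapClusterPt_iff_ultrafilter.1 (MapClusterPt.limsup hc hb)

section GroupVonNeumannAlgebra

variable {Γ H : Type*} [NormedAddCommGroup H] [InnerProductSpace ℂ H] {lam : Γ → H →L[ℂ] H}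
  {a c : H →L[ℂ] H}

lemma sub_mem_groupVN (ha : a ∈ groupVN lam) (hc : c ∈ groupVN lam) : a - c ∈ groupVN lam :=
  sub_eq_add_neg a c ▸ Set.add_mem_centralizer ha (Set.neg_mem_centralizer hc)

variable [Group Γ] [CompleteSpace H]

lemma star_mem_groupVN (hadj : ∀ g : Γ, adjoint (lam g) = lam g⁻¹) (ha : a ∈ groupVN lam) :
    star a ∈ groupVN lam := by
  have hrange : ∀ s ∈ Set.range lam, star s ∈ Set.range lam := by
    rintro _ ⟨g, rfl⟩
    exact ⟨g⁻¹, by rw [star_eq_adjoint, hadj]⟩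
  exact Set.star_mem_centralizer' (fun _ => Set.star_mem_centralizer' hrange) ha

variable (b : HilbertBasis Γ ℂ H)

def tau0Norm (x : H →L[ℂ] H) : ℝ :=
  √(tau0 b (adjoint x * x)).re

def rightTranslation (g : Γ) : H ≃ₗᵢ[ℂ] H :=
  b.permute (Equiv.mulRight g)

@[simp]
lemma rightTranslation_apply_basis (g t : Γ) : rightTranslation b g (b t) = b (t * g) := by
  simp [rightTranslation]

lemma rightTranslation_mem_centralizer (hlam : ∀ g t : Γ, lam g (b t) = b (g * t)) (g : Γ) :
    (rightTranslation b g : H →L[ℂ] H) ∈ Set.centralizer (Set.range lam) := by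
  rintro _ ⟨h, rfl⟩
  refine b.ext_continuousLinearMap fun t => ?_
  simp [hlam, mul_assoc]

lemma apply_rightTranslation_of_mem_groupVN (hlam : ∀ g t : Γ, lam g (b t) = b (g * t))
    (ha : a ∈ groupVN lam) (g : Γ) (x : H) :
    a (rightTranslation b g x) = rightTranslation b g (a x) :=
  (DFunLike.congr_fun (ha _ (rightTranslation_mem_centralizer b hlam g)) x).symm

/-- Elements of `L(Γ)` commute with right translations, so `⟪δ_g, a* δ_e⟫ = ⟪a δ_e, δ_{g⁻¹}⟫`;
summing the squares over `g` (Parseval) gives `‖a* δ_e‖ = ‖a δ_e‖`. -/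
lemma tau0_mul_adjoint (hlam : ∀ g t : Γ, lam g (b t) = b (g * t)) (ha : a ∈ groupVN lam) :
    tau0 b (a * adjoint a) = tau0 b (adjoint a * a) := by
  set δ : H := b 1
  have hcoeff : ∀ g : Γ, ⟪(b g : H), adjoint a δ⟫_ℂ = ⟪a δ, (b g⁻¹ : H)⟫_ℂ := by
    intro g
    have hδ : (rightTranslation b g).symm δ = b g⁻¹ :=
      (LinearIsometryEquiv.symm_apply_eq _).2 (by simp [δ])
    have hg : (b g : H) = rightTranslation b g δ := by simp [δ]
    rw [adjoint_inner_right, hg, apply_rightTranslation_of_mem_groupVN b hlam ha,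
      LinearIsometryEquiv.inner_map_eq_flip, hδ]
  have hleft : tau0 b (a * adjoint a) = ⟪adjoint a δ, adjoint a δ⟫_ℂ :=
    (adjoint_inner_left a _ δ).symm
  have hright : tau0 b (adjoint a * a) = ⟪a δ, a δ⟫_ℂ :=
    adjoint_inner_right a δ _
  rw [hleft, hright, ← b.tsum_inner_mul_inner, ← b.tsum_inner_mul_inner,
    ← (Equiv.inv Γ).tsum_eq]
  refine tsum_congr fun g => ?_
  rw [← inner_conj_symm (adjoint a δ), hcoeff, inner_conj_symm, mul_comm]
  simp

end GroupVonNeumannAlgebra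

namespace IsHypertrace

variable {Γ H : Type*} [Group Γ] [NormedAddCommGroup H] [InnerProductSpace ℂ H] [CompleteSpace H]
  {b : HilbertBasis Γ ℂ H} {lam : Γ → H →L[ℂ] H}

lemma norm_apply_mul_sub_apply_mul_le (hlam : ∀ g t : Γ, lam g (b t) = b (g * t))
    (hadj : ∀ g : Γ, adjoint (lam g) = lam g⁻¹) {N : Set (H →L[ℂ] H)} (hN : N ⊆ groupVN lam)
    {φ : (H →L[ℂ] H) →ₗ[ℂ] ℂ} (hφ : IsHypertrace b lam N φ) {m x : H →L[ℂ] H}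
    (hm : m ∈ groupVN lam) (hx : x ∈ N) (T : H →L[ℂ] H) :
    ‖φ (m * T) - φ (T * m)‖ ≤ 2 * ‖T‖ * tau0Norm b (m - x) := by
  set y := m - x
  have hy : y ∈ groupVN lam := sub_mem_groupVN hm (hN hx)
  have hy_star : star y ∈ groupVN lam := star_mem_groupVN hadj hy
  have hsplit : φ (m * T) - φ (T * m) = φ (y * T) - φ (T * y) := by
    simp only [y, sub_mul, mul_sub, map_sub, hφ.2.2 x hx T]
    ring
  have hτ₁ : φ (y * star y) = tau0 b (adjoint y * y) := by
    rw [hφ.2.1 _ (Set.mul_mem_centralizer hy hy_star), star_eq_adjoint, tau0_mul_adjoint b hlam hy]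
  have hτ₂ : φ (star y * y) = tau0 b (adjoint y * y) := by
    rw [hφ.2.1 _ (Set.mul_mem_centralizer hy_star hy), star_eq_adjoint]
  rw [hsplit]
  refine (hφ.1.norm_apply_mul_sub_apply_mul_le y T).trans_eq ?_
  rw [hτ₁, hτ₂, tau0Norm]
  ring

theorem exists_tendsto {ι : Type*} {l : Filter ι} (hlam : ∀ g t : Γ, lam g (b t) = b (g * t))
    (hadj : ∀ g : Γ, adjoint (lam g) = lam g⁻¹) {N : ι → Set (H →L[ℂ] H)}
    {M : Set (H →L[ℂ] H)} (hN : ∀ i, N i ⊆ groupVN lam) (hM : M ⊆ groupVN lam)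
    (happrox : ∀ m ∈ M, ∃ xs : ι → H →L[ℂ] H, (∀ i, xs i ∈ N i) ∧
      Tendsto (fun i => tau0Norm b (m - xs i)) l (𝓝 0))
    {φ : ι → (H →L[ℂ] H) →ₗ[ℂ] ℂ} (hφ : ∀ i, IsHypertrace b lam (N i) (φ i))
    (U : Ultrafilter ι) (hU : ↑U ≤ l) :
    ∃ Φ, IsHypertrace b lam M Φ ∧ ∀ T, Tendsto (fun i => φ i T) U (𝓝 (Φ T)) := by
  obtain ⟨Φ, hΦ⟩ := LinearMap.exists_tendsto_ultrafilter_of_norm_le φ norm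
    (fun i => (hφ i).1.norm_apply_le) U
  refine ⟨Φ, ⟨IsStateB.of_tendsto (fun i => (hφ i).1) hΦ, fun x hx => ?_, fun m hm T => ?_⟩, hΦ⟩
  · exact tendsto_nhds_unique (hΦ x) (tendsto_const_nhds.congr fun i => ((hφ i).2.1 x hx).symm)
  · obtain ⟨xs, hxs, hlim⟩ := happrox m hm
    have hcomm : Tendsto (fun i => φ i (m * T) - φ i (T * m)) U (𝓝 0) :=
      squeeze_zero_norm
        (fun i => (hφ i).norm_apply_mul_sub_apply_mul_le hlam hadj (hN i) (hM hm) (hxs i) T)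
        (by simpa using (hlim.mono_left hU).const_mul (2 * ‖T‖))
    exact sub_eq_zero.1 (tendsto_nhds_unique ((hΦ _).sub (hΦ _)) hcomm)

end IsHypertrace

section FPlus

variable {Γ H : Type*} [Group Γ] [NormedAddCommGroup H] [InnerProductSpace ℂ H]
  [CompleteSpace H] {b : HilbertBasis Γ ℂ H} {lam : Γ → H →L[ℂ] H} {N : Set (H →L[ℂ] H)}
  {φ : (H →L[ℂ] H) →ₗ[ℂ] ℂ}

lemma bddAbove_re_apply_isHypertrace (T : H →L[ℂ] H) :
    BddAbove ((fun φ : (H →L[ℂ] H) →ₗ[ℂ] ℂ => (φ T).re) '' {φ | IsHypertrace b lam N φ}) :=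
  ⟨‖T‖, Set.forall_mem_image.2 fun _ hψ => (Complex.re_le_norm _).trans (hψ.1.norm_apply_le _)⟩

variable [Countable Γ] {X : Type*} [TopologicalSpace X] [CompactSpace X]
  {Mop : C(X, ℂ) → (H →L[ℂ] H)} {f : C(X, ℂ)}

lemma re_apply_le_fplus (hφ : IsHypertrace b lam N φ) : (φ (Mop f)).re ≤ fplus b lam Mop N f :=
  le_csSup (bddAbove_re_apply_isHypertrace _) ⟨φ, hφ, rfl⟩

lemma neg_norm_le_fplus (hφ : IsHypertrace b lam N φ) : -‖Mop f‖ ≤ fplus b lam Mop N f :=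
  (neg_le_of_abs_le ((Complex.abs_re_le_norm _).trans (hφ.1.norm_apply_le _))).trans
    (re_apply_le_fplus hφ)

lemma fplus_le_norm : fplus b lam Mop N f ≤ ‖Mop f‖ :=
  Real.sSup_le (Set.forall_mem_image.2 fun _ hψ =>
    (Complex.re_le_norm _).trans (hψ.1.norm_apply_le _)) (norm_nonneg _)

lemma exists_isHypertrace_lt_re_apply (hφ : IsHypertrace b lam N φ) {c : ℝ}
    (hc : c < fplus b lam Mop N f) : ∃ ψ, IsHypertrace b lam N ψ ∧ c < (ψ (Mop f)).re := by
  obtain ⟨_, ⟨ψ, hψ, rfl⟩, hlt⟩ := exists_lt_of_lt_csSup (Set.Nonempty.image _ ⟨φ, hφ⟩) hc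
  exact ⟨ψ, hψ, hlt⟩

end FPlus

theorem fplus_upper_semicontinuous_general
    {Γ : Type*} [Group Γ] [Countable Γ]
    {H : Type*} [NormedAddCommGroup H] [InnerProductSpace ℂ H] [CompleteSpace H]
    (b : HilbertBasis Γ ℂ H) (lam : Γ → H →L[ℂ] H)
    (hlam : ∀ g t : Γ, lam g (b t) = b (g * t))
    (hadj : ∀ g : Γ, adjoint (lam g) = lam g⁻¹)
    {X : Type*} [TopologicalSpace X] [CompactSpace X]
    (Mop : C(X, ℂ) → (H →L[ℂ] H))
    (Mn : ℕ → VonNeumannAlgebra H) (M : VonNeumannAlgebra H)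
    (hMn : ∀ n, (Mn n : Set (H →L[ℂ] H)) ⊆ groupVN lam)
    (hMsub : (M : Set (H →L[ℂ] H)) ⊆ groupVN lam)
    (hMnAmen : ∀ n, ∃ φ : (H →L[ℂ] H) →ₗ[ℂ] ℂ, IsHypertrace b lam (Mn n : Set (H →L[ℂ] H)) φ)
    (happrox : ∀ x ∈ M, ∃ xs : ℕ → H →L[ℂ] H, (∀ n, xs n ∈ Mn n) ∧
      Filter.Tendsto (fun n => Real.sqrt (tau0 b (adjoint (x - xs n) * (x - xs n))).re)
        Filter.atTop (nhds 0)) :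
    ∀ f : C(X, ℂ),
      Filter.limsup (fun n => fplus b lam Mop (Mn n : Set (H →L[ℂ] H)) f) Filter.atTop ≤
        fplus b lam Mop (M : Set (H →L[ℂ] H)) f := by
  intro f
  set u := fun n => fplus b lam Mop (Mn n : Set (H →L[ℂ] H)) f
  choose φ₀ hφ₀ using hMnAmen
  obtain ⟨U, hU, hUlim⟩ := exists_ultrafilter_tendsto_limsup (u := u) (l := atTop)
    (isBoundedUnder_of ⟨-‖Mop f‖, fun n => neg_norm_le_fplus (hφ₀ n)⟩).isCoboundedUnder_le
    (isBoundedUnder_of ⟨‖Mop f‖, fun n => fplus_le_norm⟩)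
  have hnear : ∀ n : ℕ, ∃ φ, IsHypertrace b lam (Mn n) φ ∧ u n - 1 / (n + 1) < (φ (Mop f)).re :=
    fun n => exists_isHypertrace_lt_re_apply (hφ₀ n) (sub_lt_self _ Nat.one_div_pos_of_nat)
  choose φ hφ hφlt using hnear
  obtain ⟨Φ, hΦ, hΦlim⟩ := IsHypertrace.exists_tendsto hlam hadj hMn hMsub happrox hφ U hU
  have hlim : Tendsto (fun n : ℕ => u n - 1 / ((n : ℝ) + 1)) U (𝓝 (limsup u atTop)) := by
    simpa using hUlim.sub (tendsto_one_div_add_atTop_nhds_zero_nat.mono_left hU)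
  calc limsup u atTop ≤ (Φ (Mop f)).re :=
        le_of_tendsto_of_tendsto' hlim ((Complex.continuous_re.tendsto _).comp (hΦlim _))
          fun n => (hφlt n).le
    _ ≤ _ := re_apply_le_fplus hΦ

/-- **upper semicontinuity.** Let `(Mₙ)` and `M` be amenable von Neumann
subalgebras of `L(Γ)` such that every `x ∈ M` is a `‖·‖_{τ₀}`-limit of a sequence
`xₙ ∈ Mₙ`. Then for every `f ∈ C(X)`, `f⁺(M) ≥ limsupₙ f⁺(Mₙ)`. -/
theorem fplus_upper_semicontinuous
    {Γ : Type*} [Group Γ] [Countable Γ]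
    {H : Type*} [NormedAddCommGroup H] [InnerProductSpace ℂ H] [CompleteSpace H]
    (b : HilbertBasis Γ ℂ H) (lam : Γ → H →L[ℂ] H)
    (hlam : ∀ g t : Γ, lam g (b t) = b (g * t))
    (hmul : ∀ g h : Γ, lam (g * h) = lam g * lam h)
    (hadj : ∀ g : Γ, adjoint (lam g) = lam g⁻¹)
    {X : Type*} [TopologicalSpace X] [CompactSpace X] [T2Space X]
    [MulAction Γ X] (hc : ∀ g : Γ, Continuous fun y : X => g • y)
    (x₀ : X)
    (Mop : C(X, ℂ) → (H →L[ℂ] H))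
    (hMop : ∀ (f : C(X, ℂ)) (t : Γ), Mop f (b t) = f (t • x₀) • (b t : H))
    (Mn : ℕ → VonNeumannAlgebra H) (M : VonNeumannAlgebra H)
    (hMn : ∀ n, (Mn n : Set (H →L[ℂ] H)) ⊆ groupVN lam)
    (hMsub : (M : Set (H →L[ℂ] H)) ⊆ groupVN lam)
    (hMnAmen : ∀ n, ∃ φ : (H →L[ℂ] H) →ₗ[ℂ] ℂ, IsHypertrace b lam (Mn n : Set (H →L[ℂ] H)) φ)
    (hMAmen : ∃ φ : (H →L[ℂ] H) →ₗ[ℂ] ℂ, IsHypertrace b lam (M : Set (H →L[ℂ] H)) φ)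
    (happrox : ∀ x ∈ M, ∃ xs : ℕ → H →L[ℂ] H, (∀ n, xs n ∈ Mn n) ∧
      Filter.Tendsto (fun n => Real.sqrt (tau0 b (adjoint (x - xs n) * (x - xs n))).re)
        Filter.atTop (nhds 0)) :
    ∀ f : C(X, ℂ),
      Filter.limsup (fun n => fplus b lam Mop (Mn n : Set (H →L[ℂ] H)) f) Filter.atTop ≤
        fplus b lam Mop (M : Set (H →L[ℂ] H)) f :=
  fplus_upper_semicontinuous_general b lam hlam hadj Mop Mn M hMn hMsub hMnAmen happrox

end
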